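/- arXiv:2001.09121 — 6 statements merged into one kernel-verified Lean document; each statement's English description precedes it below -/
import Mathlib

section
/- Every nonzero codeword of the binary k-dimensional simplex code has Hamming weight exactly 2^{k−1}; in particular its minimum distance is 2^{k−1}. -/
open scoped BigOperators

lemma zmod2_ne_zero_iff (x : ZMod 2) : x ≠ 0 ↔ x = 1 := by revert x; decide

lemma fiber_card {k : ℕ} (a : Fin k → ZMod 2) (ha : a ≠ 0) :
    (Finset.univ.filter (fun v : Fin k → ZMod 2 => dotProduct a v = 1)).card
      = 2 ^ (k - 1) := by
  obtain ⟨i, hi⟩ := Function.ne_iff.mp ha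
  have hk : 1 ≤ k := by
    rcases Nat.eq_zero_or_pos k with h | h
    · exact absurd i.isLt (by omega)
    · exact h
  have hai : a i = 1 := (zmod2_ne_zero_iff _).mp hi
  set w : Fin k → ZMod 2 := Pi.single i 1 with hw
  have hdw : dotProduct a w = 1 := by
    simp [dotProduct, hw, Pi.single_apply, mul_ite, hai]
  have hinv : ∀ v : Fin k → ZMod 2, v + w + w = v := by
    intro v; funext j
    have h2 : ∀ x : ZMod 2, x + x = 0 := by decide
    simp only [Pi.add_apply]
    rw [add_assoc, h2, add_zero]
  have hdot : ∀ v : Fin k → ZMod 2,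
      dotProduct a (v + w) = dotProduct a v + 1 := by
    intro v; rw [dotProduct_add, hdw]
  have h01 : (0 : ZMod 2) + 1 = 1 := by decide
  have h11 : (1 : ZMod 2) + 1 = 0 := by decide
  have hcard_eq :
      (Finset.univ.filter (fun v : Fin k → ZMod 2 => dotProduct a v = 0)).card =
      (Finset.univ.filter (fun v : Fin k → ZMod 2 => dotProduct a v = 1)).card := by
    apply Finset.card_bij' (fun v _ => v + w) (fun v _ => v + w)
    · intro v hv
      simp only [Finset.mem_filter, Finset.mem_univ, true_and] at hv ⊢
      rw [hdot, hv, h01]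
    · intro v hv
      simp only [Finset.mem_filter, Finset.mem_univ, true_and] at hv ⊢
      rw [hdot, hv, h11]
    · intro v _; exact hinv v
    · intro v _; exact hinv v
  have hsplit :
      (Finset.univ.filter (fun v : Fin k → ZMod 2 => dotProduct a v = 1)).card +
      (Finset.univ.filter (fun v : Fin k → ZMod 2 => dotProduct a v = 0)).card =
      Fintype.card (Fin k → ZMod 2) := by
    have hpart := Finset.card_filter_add_card_filter_not
      (s := (Finset.univ : Finset (Fin k → ZMod 2)))
      (p := fun v : Fin k → ZMod 2 => dotProduct a v = 1)
    rw [Finset.card_univ] at hpart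
    rw [← hpart]
    congr 2
    apply Finset.filter_congr
    intro v _
    exact (by decide : ∀ x : ZMod 2, (x = 0 ↔ ¬ x = 1)) _
  have hcardfun : Fintype.card (Fin k → ZMod 2) = 2 ^ k := by
    simp [Fintype.card_fun]
  have hpow : 2 ^ k = 2 * 2 ^ (k - 1) := by
    conv_lhs => rw [show k = (k - 1) + 1 by omega]
    rw [pow_succ]; ring
  omega

lemma single_ne_zero' {k : ℕ} (hk : 1 ≤ k) :
    (Pi.single (⟨0, hk⟩ : Fin k) (1 : ZMod 2) : Fin k → ZMod 2) ≠ 0 := by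
  intro h
  have := congrFun h ⟨0, hk⟩
  simp [Pi.single_apply] at this

/-- Every nonzero codeword of the binary `k`-dimensional simplex code (whose generator
matrix has as columns all `2^k - 1` nonzero vectors of `F_2^k`, each exactly once) has
Hamming weight exactly `2^(k-1)`; in particular the minimum distance is `2^(k-1)`. -/
theorem simplex_code_weights {k n : ℕ} (hk : 1 ≤ k)
    (G : Matrix (Fin k) (Fin n) (ZMod 2))
    (hG : ∀ v : Fin k → ZMod 2, v ≠ 0 → ∃! j : Fin n, (fun i => G i j) = v) :
    (∀ a : Fin k → ZMod 2, a ≠ 0 → hammingNorm (Matrix.vecMul a G) = 2 ^ (k - 1)) ∧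
      sInf {w : ℕ | ∃ a : Fin k → ZMod 2, a ≠ 0 ∧ w = hammingNorm (Matrix.vecMul a G)} =
        2 ^ (k - 1) := by
  have main : ∀ a : Fin k → ZMod 2, a ≠ 0 →
      hammingNorm (Matrix.vecMul a G) = 2 ^ (k - 1) := by
    intro a ha
    have hvm : ∀ j, Matrix.vecMul a G j = dotProduct a (fun i => G i j) := by
      intro j; rfl
    have hnorm : hammingNorm (Matrix.vecMul a G) =
        (Finset.univ.filter (fun j : Fin n => Matrix.vecMul a G j ≠ 0)).card := by
      rfl
    rw [hnorm, ← fiber_card a ha]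
    apply Finset.card_bij (fun j _ => (fun i => G i j))
    · intro j hj
      simp only [Finset.mem_filter, Finset.mem_univ, true_and] at hj ⊢
      rw [← hvm j]
      exact (zmod2_ne_zero_iff _).mp hj
    · intro j₁ hj₁ j₂ hj₂ heq
      simp only [Finset.mem_filter, Finset.mem_univ, true_and] at hj₁ hj₂
      have hcol : (fun i => G i j₁) ≠ 0 := by
        intro hc
        apply hj₁
        rw [hvm j₁, hc, dotProduct_zero]
      obtain ⟨j', -, huniq⟩ := hG (fun i => G i j₁) hcol
      rw [huniq j₁ rfl, huniq j₂ heq.symm]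
    · intro v hv
      simp only [Finset.mem_filter, Finset.mem_univ, true_and] at hv
      have hvne : v ≠ 0 := by
        intro hc
        rw [hc, dotProduct_zero] at hv
        exact absurd hv (by decide)
      obtain ⟨j, hj, -⟩ := hG v hvne
      refine ⟨j, ?_, hj⟩
      simp only [Finset.mem_filter, Finset.mem_univ, true_and]
      rw [hvm j, hj, hv]
      decide
  refine ⟨main, ?_⟩
  have hset : {w : ℕ | ∃ a : Fin k → ZMod 2, a ≠ 0 ∧ w = hammingNorm (Matrix.vecMul a G)} =
      {2 ^ (k - 1)} := by
    ext w
    simp only [Set.mem_setOf_eq, Set.mem_singleton_iff]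
    constructor
    · rintro ⟨a, ha, rfl⟩; exact main a ha
    · rintro rfl
      exact ⟨_, single_ne_zero' hk, (main _ (single_ne_zero' hk)).symm⟩
  rw [hset, csInf_singleton]
end

section
/- Suppose the service rate region of a code contains s·e_i for some i ∈ [k], and H is a hyperplane of F_q^k not containing e_i. Then s ≤ Σ_{p ∉ H} μ(p), where the sum of service rates is over all points p of the projective space PG(k−1,q) not lying in H (μ(p) being the total service rate of all servers whose generator-matrix column spans p). -/
open scoped BigOperators
open scoped Classical

/-- `R` is a recovery set for file `i` w.r.t. generator matrix `G`. -/
def isRecoverySet {F : Type*} [Field F] {k n : ℕ} (G : Matrix (Fin k) (Fin n) F)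
    (i : Fin k) (R : Finset (Fin n)) : Prop :=
  ∃ α : Fin n → F, (fun r => ∑ l ∈ R, α l * G r l) = Pi.single i (1 : F)

/-- The demand vector `lam` can be served by the coded storage system. -/
def servable {F : Type*} [Field F] {k n : ℕ} (G : Matrix (Fin k) (Fin n) F)
    (μ : Fin n → ℝ) (lam : Fin k → ℝ) : Prop :=
  ∃ w : Fin k → Finset (Fin n) → ℝ,
    (∀ i R, 0 ≤ w i R) ∧
    (∀ i R, w i R ≠ 0 → isRecoverySet G i R) ∧
    (∀ i, ∑ R : Finset (Fin n), w i R = lam i) ∧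
    (∀ l : Fin n,
      ∑ i : Fin k, ∑ R ∈ Finset.univ.filter (fun R : Finset (Fin n) => l ∈ R), w i R ≤ μ l)

/-- If `s • e_i` is servable and `H` is a hyperplane of `F^k` not containing `e_i`,
then `s ≤ ∑_{p ∉ H} μ(p)`, the sum over all points `p` of `PG(k-1,q)` spanned by some
column of `G` and not lying in `H`, where `μ(p)` is the total service rate of the
servers whose column spans `p`. -/
theorem hyperplane_constraint {F : Type*} [Field F] [Fintype F] {k n : ℕ}
    (G : Matrix (Fin k) (Fin n) F)
    (hcols : ∀ l : Fin n, (fun r => G r l) ≠ 0)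
    (μ : Fin n → ℝ) (hμ : ∀ l, 0 ≤ μ l)
    (i : Fin k) (s : ℝ)
    (H : Submodule F (Fin k → F)) (hH : Module.finrank F H = k - 1)
    (hei : Pi.single i (1 : F) ∉ H)
    (hs : servable G μ (fun j => if j = i then s else 0)) :
    s ≤ ∑ p ∈ (Finset.univ.filter (fun l : Fin n => (fun r => G r l) ∉ H)).image
          (fun l => Submodule.span F {(fun r => G r l)}),
        ∑ l ∈ Finset.univ.filter
            (fun l' : Fin n => Submodule.span F {(fun r => G r l')} = p), μ l := by
  classical
  obtain ⟨w, hw0, hwrec, hwsum, hwcap⟩ := hs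
  set c : Fin n → (Fin k → F) := fun l => (fun r => G r l) with hc
  set S : Finset (Fin n) := Finset.univ.filter (fun l : Fin n => c l ∉ H) with hSdef
  -- membership in the image of spans characterizes being outside H
  have hmem : ∀ l : Fin n,
      (Submodule.span F {c l} ∈ S.image (fun l => Submodule.span F {c l})) ↔ c l ∉ H := by
    intro l
    constructor
    · rintro h hlH
      rw [Finset.mem_image] at h
      obtain ⟨l', hl', hsp⟩ := h
      rw [hSdef, Finset.mem_filter] at hl'
      apply hl'.2
      have hmem' : c l' ∈ Submodule.span F {c l} := by
        rw [← hsp]; exact Submodule.mem_span_singleton_self _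
      obtain ⟨a, ha⟩ := Submodule.mem_span_singleton.1 hmem'
      rw [← ha]
      exact H.smul_mem a hlH
    · intro h
      exact Finset.mem_image_of_mem _ (by simp [hSdef, h])
  -- the fibers are pairwise disjoint
  have hdisj : (S.image (fun l => Submodule.span F {c l}) : Set (Submodule F (Fin k → F))).Pairwise
      (fun p p' => Disjoint (Finset.univ.filter (fun l' : Fin n => Submodule.span F {c l'} = p))
        (Finset.univ.filter (fun l' : Fin n => Submodule.span F {c l'} = p'))) := by
    intro p hp p' hp' hne
    refine Finset.disjoint_left.2 ?_
    intro a ha ha'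
    rw [Finset.mem_filter] at ha ha'
    exact hne (ha.2 ▸ ha'.2.symm ▸ rfl)
  -- the RHS equals the sum over columns not in H
  have hRHS : (∑ p ∈ S.image (fun l => Submodule.span F {c l}),
      ∑ l ∈ Finset.univ.filter (fun l' : Fin n => Submodule.span F {c l'} = p), μ l)
      = ∑ l ∈ S, μ l := by
    rw [← Finset.sum_biUnion hdisj]
    congr 1
    ext l
    simp only [Finset.mem_biUnion, Finset.mem_filter, Finset.mem_univ, true_and]
    constructor
    · rintro ⟨p, hp, rfl⟩
      have := (hmem l).1 hp
      simp [hSdef, this]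
    · intro hl
      refine ⟨Submodule.span F {c l}, ?_, rfl⟩
      rw [hSdef, Finset.mem_filter] at hl
      exact (hmem l).2 hl.2
  rw [hRHS]
  -- s equals total weight for file i
  have hs_eq : s = ∑ R : Finset (Fin n), w i R := by
    have := hwsum i; simp at this; exact this.symm
  -- each recovery set's weight is bounded by the weights over its out-of-H columns
  have key : ∀ R : Finset (Fin n), w i R ≤ ∑ _l ∈ S.filter (· ∈ R), w i R := by
    intro R
    rcases eq_or_ne (w i R) 0 with h0 | h0
    · simp [h0]
    · obtain ⟨α, hα⟩ := hwrec i R h0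
      have hex : ∃ l ∈ R, c l ∉ H := by
        by_contra hall
        push_neg at hall
        apply hei
        have hsum : Pi.single i (1 : F) = ∑ l ∈ R, α l • c l := by
          funext r
          rw [← hα]
          simp [hc, Finset.sum_apply]
        rw [hsum]
        exact Submodule.sum_mem _ fun l hl => H.smul_mem _ (hall l hl)
      obtain ⟨l0, hl0R, hl0H⟩ := hex
      have hl0 : l0 ∈ S.filter (· ∈ R) := by
        simp [hSdef, hl0R, hl0H]
      exact Finset.single_le_sum (f := fun _ => w i R) (fun _ _ => hw0 i R) hl0
  -- swap the order of summation
  have swap : (∑ R : Finset (Fin n), ∑ _l ∈ S.filter (· ∈ R), w i R)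
      = ∑ l ∈ S, ∑ R ∈ Finset.univ.filter (fun R : Finset (Fin n) => l ∈ R), w i R := by
    simp_rw [Finset.sum_filter]
    exact Finset.sum_comm
  -- capacity constraint at each column
  have cap : ∀ l ∈ S, ∑ R ∈ Finset.univ.filter (fun R : Finset (Fin n) => l ∈ R), w i R ≤ μ l := by
    intro l _
    refine le_trans ?_ (hwcap l)
    exact Finset.single_le_sum
      (f := fun j => ∑ R ∈ Finset.univ.filter (fun R : Finset (Fin n) => l ∈ R), w j R)
      (fun j _ => Finset.sum_nonneg fun R _ => hw0 j R) (Finset.mem_univ i)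
  calc s = ∑ R : Finset (Fin n), w i R := hs_eq
    _ ≤ ∑ R : Finset (Fin n), ∑ _l ∈ S.filter (· ∈ R), w i R :=
        Finset.sum_le_sum fun R _ => key R
    _ = ∑ l ∈ S, ∑ R ∈ Finset.univ.filter (fun R : Finset (Fin n) => l ∈ R), w i R := swap
    _ ≤ ∑ l ∈ S, μ l := Finset.sum_le_sum cap
end

section
/- Let C be a full-length linear [n,k,d]_q code with all server rates μ_l = 1. If for every i ∈ [k] the vector s·e_i lies in the service rate region, then d ≥ ⌈s⌉. -/
open scoped BigOperators
open scoped Classical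

lemma recovery_hits_support {F : Type*} [Field F] {k n : ℕ} (G : Matrix (Fin k) (Fin n) F)
    (a : Fin k → F) (i : Fin k) (hai : a i ≠ 0) (R : Finset (Fin n))
    (hR : isRecoverySet G i R) : ∃ l ∈ R, Matrix.vecMul a G l ≠ 0 := by
  obtain ⟨α, hα⟩ := hR
  by_contra h
  push_neg at h
  have hα' := fun r => congrFun hα r
  have key : ∑ r, a r * (∑ l ∈ R, α l * G r l) = a i := by
    simp_rw [hα', Pi.single_apply, mul_ite, mul_one, mul_zero]
    simp
  have key2 : ∑ r, a r * (∑ l ∈ R, α l * G r l) = 0 := by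
    have : ∀ r : Fin k, a r * (∑ l ∈ R, α l * G r l) = ∑ l ∈ R, α l * (a r * G r l) := by
      intro r
      rw [Finset.mul_sum]
      exact Finset.sum_congr rfl fun l _ => by ring
    simp_rw [this]
    rw [Finset.sum_comm]
    refine Finset.sum_eq_zero fun l hl => ?_
    rw [← Finset.mul_sum]
    have : Matrix.vecMul a G l = 0 := h l hl
    rw [Matrix.vecMul, dotProduct] at this
    simp [this]
  rw [key] at key2
  exact hai key2

lemma s_le_weight {F : Type*} [Field F] [Fintype F] [DecidableEq F] {k n : ℕ}
    (G : Matrix (Fin k) (Fin n) F) (s : ℝ)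
    (hs : ∀ i : Fin k, servable G (fun _ => (1 : ℝ)) (fun j => if j = i then s else 0))
    (a : Fin k → F) (ha : a ≠ 0) : s ≤ (hammingNorm (Matrix.vecMul a G) : ℝ) := by
  obtain ⟨i, hai⟩ := Function.ne_iff.mp ha
  simp only [Pi.zero_apply] at hai
  obtain ⟨w, h0, hrec, hsum, hcap⟩ := hs i
  set S : Finset (Fin n) := Finset.univ.filter (fun l => Matrix.vecMul a G l ≠ 0) with hS
  have hnorm : hammingNorm (Matrix.vecMul a G) = S.card := rfl
  have hsi : ∑ R : Finset (Fin n), w i R = s := by simpa using hsum i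
  have step1 : s ≤ ∑ R : Finset (Fin n), ((S.filter (fun l => l ∈ R)).card : ℝ) * w i R := by
    rw [← hsi]
    refine Finset.sum_le_sum fun R _ => ?_
    by_cases hw : w i R = 0
    · simp [hw]
    · obtain ⟨l, hlR, hl⟩ := recovery_hits_support G a i hai R (hrec i R hw)
      have hmem : l ∈ S.filter (fun l => l ∈ R) := by
        simp [hS, hl, hlR]
      have hcard : (1 : ℝ) ≤ ((S.filter (fun l => l ∈ R)).card : ℝ) := by
        exact_mod_cast Finset.card_pos.mpr ⟨l, hmem⟩
      nlinarith [h0 i R]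
  have step2 : ∑ R : Finset (Fin n), ((S.filter (fun l => l ∈ R)).card : ℝ) * w i R
      = ∑ l ∈ S, ∑ R ∈ Finset.univ.filter (fun R : Finset (Fin n) => l ∈ R), w i R := by
    simp_rw [Finset.sum_filter]
    rw [Finset.sum_comm]
    refine Finset.sum_congr rfl fun R _ => ?_
    rw [Finset.sum_ite_mem, Finset.sum_const, nsmul_eq_mul]
    congr 2
  have step3 : ∀ l ∈ S, ∑ R ∈ Finset.univ.filter (fun R : Finset (Fin n) => l ∈ R), w i R ≤ 1 := by
    intro l _
    have := hcap l
    calc ∑ R ∈ Finset.univ.filter (fun R : Finset (Fin n) => l ∈ R), w i R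
        ≤ ∑ j : Fin k, ∑ R ∈ Finset.univ.filter (fun R : Finset (Fin n) => l ∈ R), w j R := by
          refine Finset.single_le_sum
            (f := fun j => ∑ R ∈ Finset.univ.filter (fun R : Finset (Fin n) => l ∈ R), w j R)
            (fun j _ => ?_) (Finset.mem_univ i)
          exact Finset.sum_nonneg fun R _ => h0 j R
      _ ≤ 1 := this
  calc s ≤ _ := step1
    _ = _ := step2
    _ ≤ ∑ l ∈ S, (1 : ℝ) := Finset.sum_le_sum step3
    _ = (S.card : ℝ) := by simp
    _ = _ := by rw [hnorm]

/-- If all servers have unit rate and `s • e_i` lies in the service rate region for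
every `i ∈ [k]`, then the minimum distance `d` of the code is at least `⌈s⌉`. -/
theorem min_distance_ge_ceil {F : Type*} [Field F] [Fintype F] [DecidableEq F] {k n : ℕ}
    (hk : 1 ≤ k)
    (G : Matrix (Fin k) (Fin n) F)
    (hcols : ∀ l : Fin n, (fun r => G r l) ≠ 0)
    (d : ℕ)
    (hd : d = sInf {w : ℕ | ∃ a : Fin k → F, a ≠ 0 ∧ w = hammingNorm (Matrix.vecMul a G)})
    (s : ℝ)
    (hs : ∀ i : Fin k, servable G (fun _ => (1 : ℝ)) (fun j => if j = i then s else 0)) :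
    ⌈s⌉ ≤ (d : ℤ) := by
  have hne : {w : ℕ | ∃ a : Fin k → F, a ≠ 0 ∧ w = hammingNorm (Matrix.vecMul a G)}.Nonempty := by
    have hk' : 0 < k := hk
    set i0 : Fin k := ⟨0, hk'⟩
    have ha : (Pi.single i0 (1 : F) : Fin k → F) ≠ 0 := by
      intro h
      have := congrFun h i0
      simp at this
    exact ⟨_, Pi.single i0 (1 : F), ha, rfl⟩
  have hmem := Nat.sInf_mem hne
  rw [← hd] at hmem
  obtain ⟨a, ha, hda⟩ := hmem
  have hle : s ≤ (d : ℝ) := by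
    rw [hda]
    exact s_le_weight G s hs a ha
  exact Int.ceil_le.mpr (by exact_mod_cast hle)
end

section
/- If Σ_{i∈I} s_i·e_i (s_i ≥ 0) belongs to the service rate region and H is a hyperplane of F_q^k containing none of the unit vectors e_i for i ∈ I, then Σ_{i∈I} s_i ≤ Σ_{p ∉ H} μ(p), the total service capacity of the points of PG(k−1,q) outside H. -/
open scoped BigOperators
open scoped Classical

/-- If `∑_{i ∈ I} s_i • e_i` is servable (`s_i ≥ 0`) and `H` is a hyperplane
containing none of the unit vectors `e_i`, `i ∈ I`, then `∑_{i ∈ I} s_i` is at most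
the total service capacity `∑_{p ∉ H} μ(p)` of the points of `PG(k-1,q)` outside `H`. -/
theorem hyperplane_constraint_multi {F : Type*} [Field F] [Fintype F] {k n : ℕ}
    (G : Matrix (Fin k) (Fin n) F)
    (hcols : ∀ l : Fin n, (fun r => G r l) ≠ 0)
    (μ : Fin n → ℝ) (hμ : ∀ l, 0 ≤ μ l)
    (I : Finset (Fin k)) (s : Fin k → ℝ) (hsnn : ∀ i, 0 ≤ s i)
    (H : Submodule F (Fin k → F)) (hH : Module.finrank F H = k - 1)
    (hei : ∀ i ∈ I, Pi.single i (1 : F) ∉ H)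
    (hs : servable G μ (fun j => if j ∈ I then s j else 0)) :
    ∑ i ∈ I, s i ≤
      ∑ p ∈ (Finset.univ.filter (fun l : Fin n => (fun r => G r l) ∉ H)).image
          (fun l => Submodule.span F {(fun r => G r l)}),
        ∑ l ∈ Finset.univ.filter
            (fun l' : Fin n => Submodule.span F {(fun r => G r l')} = p), μ l := by
  classical
  set S : Finset (Fin n) := Finset.univ.filter (fun l : Fin n => (fun r => G r l) ∉ H) with hS
  -- if two columns span the same point and one is outside H, so is the other
  have hspan : ∀ l l' : Fin n,
      Submodule.span F {(fun r => G r l')} = Submodule.span F {(fun r => G r l)} →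
      (fun r => G r l) ∉ H → (fun r => G r l') ∉ H := by
    intro l l' hsp hl hl'
    apply hl
    have hmem : (fun r => G r l) ∈ Submodule.span F {(fun r => G r l')} := by
      rw [hsp]; exact Submodule.mem_span_singleton_self _
    obtain ⟨c, hc⟩ := Submodule.mem_span_singleton.mp hmem
    rw [← hc]
    exact H.smul_mem c hl'
  -- Step A: the RHS equals ∑ l ∈ S, μ l
  have hA : (∑ p ∈ S.image (fun l => Submodule.span F {(fun r => G r l)}),
      ∑ l ∈ Finset.univ.filter
          (fun l' : Fin n => Submodule.span F {(fun r => G r l')} = p), μ l)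
      = ∑ l ∈ S, μ l := by
    rw [← Finset.sum_fiberwise_of_maps_to
      (g := fun l => Submodule.span F {(fun r => G r l)})
      (fun l hl => Finset.mem_image_of_mem (fun l => Submodule.span F {(fun r => G r l)}) hl) μ]
    apply Finset.sum_congr rfl
    intro p hp
    apply Finset.sum_congr _ (fun _ _ => rfl)
    obtain ⟨l, hlS, hlp⟩ := Finset.mem_image.mp hp
    have hlH : (fun r => G r l) ∉ H := (Finset.mem_filter.mp hlS).2
    ext l'
    simp only [Finset.mem_filter, Finset.mem_univ, true_and, hS]
    constructor
    · intro hsp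
      have := hspan l l' (hlp ▸ hsp) hlH
      tauto
    · tauto
  rw [hA]
  -- Step B: charging argument
  obtain ⟨w, hw0, hwrec, hwsum, hwcap⟩ := hs
  have hout : ∀ i ∈ I, ∀ R : Finset (Fin n), w i R ≠ 0 →
      ∃ l ∈ R, (fun r => G r l) ∉ H := by
    intro i hi R hR
    obtain ⟨α, hα⟩ := hwrec i R hR
    by_contra hcon
    push_neg at hcon
    apply hei i hi
    rw [← hα]
    have heq : (fun r => ∑ l ∈ R, α l * G r l)
        = ∑ l ∈ R, α l • (fun r => G r l) := by
      funext r; simp [Finset.sum_apply]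
    rw [heq]
    exact Submodule.sum_mem _ (fun l hl => H.smul_mem _ (hcon l hl))
  have hswap : ∀ i, (∑ R : Finset (Fin n), ∑ l ∈ S.filter (· ∈ R), w i R)
      = ∑ l ∈ S, ∑ R ∈ Finset.univ.filter (fun R : Finset (Fin n) => l ∈ R), w i R := by
    intro i
    simp_rw [Finset.sum_filter]
    exact Finset.sum_comm
  calc ∑ i ∈ I, s i = ∑ i ∈ I, ∑ R : Finset (Fin n), w i R := by
        refine Finset.sum_congr rfl fun i hi => ?_
        rw [hwsum i]; simp [hi]
    _ ≤ ∑ i ∈ I, ∑ R : Finset (Fin n), ∑ l ∈ S.filter (· ∈ R), w i R := by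
        refine Finset.sum_le_sum fun i hi => Finset.sum_le_sum fun R _ => ?_
        by_cases h : w i R = 0
        · rw [h]
          exact Finset.sum_nonneg fun l _ => le_refl 0
        · obtain ⟨l, hlR, hlH⟩ := hout i hi R h
          have hmem : l ∈ S.filter (· ∈ R) := by
            simp [hS, hlH, hlR]
          calc w i R = ∑ l' ∈ ({l} : Finset (Fin n)), w i R := by simp
            _ ≤ _ := Finset.sum_le_sum_of_subset_of_nonneg
                (Finset.singleton_subset_iff.mpr hmem) (fun _ _ _ => hw0 i R)
    _ = ∑ i ∈ I, ∑ l ∈ S, ∑ R ∈ Finset.univ.filter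
          (fun R : Finset (Fin n) => l ∈ R), w i R := by
        exact Finset.sum_congr rfl fun i _ => hswap i
    _ = ∑ l ∈ S, ∑ i ∈ I, ∑ R ∈ Finset.univ.filter
          (fun R : Finset (Fin n) => l ∈ R), w i R := Finset.sum_comm
    _ ≤ ∑ l ∈ S, ∑ i : Fin k, ∑ R ∈ Finset.univ.filter
          (fun R : Finset (Fin n) => l ∈ R), w i R := by
        refine Finset.sum_le_sum fun l _ => ?_
        exact Finset.sum_le_sum_of_subset_of_nonneg (Finset.subset_univ I)
          (fun i _ _ => Finset.sum_nonneg fun R _ => hw0 i R)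
    _ ≤ ∑ l ∈ S, μ l := Finset.sum_le_sum fun l _ => hwcap l
end

section
/- The service rate region of the binary k-dimensional simplex code with unit server capacities equals {λ ∈ R_{≥0}^k : Σ_{i=1}^k λ_i ≤ 2^{k−1}}. -/
open scoped BigOperators
open scoped Classical

namespace SimplexSRRAux

lemma zmod2_alt : ∀ a : ZMod 2, a = 0 ∨ a = 1 := by decide

lemma fun_add_self {k : ℕ} (u : Fin k → ZMod 2) : u + u = 0 := by
  funext r; exact CharTwo.add_self_eq_zero _

lemma fun_add_eq_zero_iff {k : ℕ} {u v : Fin k → ZMod 2} : u + v = 0 ↔ u = v := by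
  constructor
  · intro h
    have := congrArg (· + v) h
    simpa [add_assoc, fun_add_self, zero_add] using this
  · intro h; rw [h]; exact fun_add_self v

/-- The number of vectors in `F_2^k` with coordinate sum `1` is `2^(k-1)`. -/
lemma card_sum_one {k : ℕ} (hk : 1 ≤ k) :
    (Finset.univ.filter fun v : Fin k → ZMod 2 => ∑ r, v r = 1).card = 2 ^ (k - 1) := by
  set i0 : Fin k := ⟨0, hk⟩
  set e : Fin k → ZMod 2 := Pi.single i0 1 with he
  have key : ∀ v : Fin k → ZMod 2, ∑ r, (v r + e r) = (∑ r, v r) + 1 := by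
    intro v
    rw [Finset.sum_add_distrib, he, Finset.sum_pi_single']
    simp
  have hinv : ∀ v : Fin k → ZMod 2, v + e + e = v := by
    intro v; funext r
    show v r + e r + e r = v r
    rw [add_assoc, CharTwo.add_self_eq_zero, add_zero]
  have hbij : (Finset.univ.filter fun v : Fin k → ZMod 2 => ∑ r, v r = 1).card
      = (Finset.univ.filter fun v : Fin k → ZMod 2 => ¬ (∑ r, v r = 1)).card := by
    apply Finset.card_bij' (fun v _ => v + e) (fun v _ => v + e)
    · intro v hv
      simp only [Finset.mem_filter, Finset.mem_univ, true_and] at hv ⊢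
      rw [show ∑ r, (v + e) r = ∑ r, (v r + e r) from rfl, key, hv]
      decide
    · intro v hv
      simp only [Finset.mem_filter, Finset.mem_univ, true_and] at hv ⊢
      rw [show ∑ r, (v + e) r = ∑ r, (v r + e r) from rfl, key]
      rcases zmod2_alt (∑ r, v r) with h | h
      · rw [h]; decide
      · exact absurd h hv
    · intro v hv; exact hinv v
    · intro v hv; exact hinv v
  have htot := Finset.card_filter_add_card_filter_not
    (s := (Finset.univ : Finset (Fin k → ZMod 2))) (p := fun v => ∑ r, v r = 1)
  have hcard : (Finset.univ : Finset (Fin k → ZMod 2)).card = 2 ^ k := by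
    simp [Finset.card_univ]
  have h2 : 2 ^ k = 2 ^ (k - 1) * 2 := by
    rw [← pow_succ, Nat.sub_add_cancel hk]
  rw [hcard] at htot
  generalize hA : (Finset.univ.filter fun v : Fin k → ZMod 2 => ∑ r, v r = 1).card = a
    at hbij htot ⊢
  generalize hB : (Finset.univ.filter fun v : Fin k → ZMod 2 => ¬ (∑ r, v r = 1)).card = b
    at hbij htot
  rw [h2] at htot
  clear_value e i0
  clear hA hB key hinv he hcard e i0 h2
  generalize 2 ^ (k - 1) = P at htot ⊢
  omega

end SimplexSRRAux

open SimplexSRRAux in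
/-- The service rate region of the binary `k`-dimensional simplex code (whose generator
matrix has as columns all nonzero vectors of `F_2^k`, each once) with unit server
capacities is exactly `{λ ≥ 0 : ∑ i, λ_i ≤ 2^(k-1)}`. -/
theorem simplex_service_rate_region {k n : ℕ} (hk : 1 ≤ k)
    (G : Matrix (Fin k) (Fin n) (ZMod 2))
    (hG : ∀ v : Fin k → ZMod 2, v ≠ 0 → ∃! l : Fin n, (fun r => G r l) = v)
    (lam : Fin k → ℝ) :
    servable G (fun _ => (1 : ℝ)) lam ↔
      ((∀ i, 0 ≤ lam i) ∧ ∑ i : Fin k, lam i ≤ 2 ^ (k - 1)) := by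
  constructor
  · -- FORWARD DIRECTION
    rintro ⟨w, hw0, hwrec, hwsum, hwcap⟩
    refine ⟨fun i => by
      rw [← hwsum i]; exact Finset.sum_nonneg fun R _ => hw0 i R, ?_⟩
    set C : Finset (Fin n) := Finset.univ.filter (fun l => ∑ r, G r l = 1) with hC
    have hCcard : C.card = 2 ^ (k - 1) := by
      rw [← card_sum_one hk]
      apply Finset.card_bij (fun l _ => fun r => G r l)
      · intro l hl
        simp only [hC, Finset.mem_filter, Finset.mem_univ, true_and] at hl ⊢
        exact hl
      · intro l hl l' hl' hll
        simp only [hC, Finset.mem_filter, Finset.mem_univ, true_and] at hl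
        have hne : (fun r => G r l) ≠ 0 := by
          intro h0
          rw [show (fun r => G r l) = (fun _ => (0 : ZMod 2)) from h0] at hl
          simp at hl
        obtain ⟨l0, _, huniq⟩ := hG _ hne
        exact (huniq l rfl).trans (huniq l' hll.symm).symm
      · intro v hv
        simp only [Finset.mem_filter, Finset.mem_univ, true_and] at hv
        have hvne : v ≠ 0 := by
          intro h0; rw [h0] at hv; simp at hv
        obtain ⟨l, hl, -⟩ := hG v hvne
        refine ⟨l, ?_, hl⟩
        simp only [hC, Finset.mem_filter, Finset.mem_univ, true_and]
        calc ∑ r, G r l = ∑ r, v r := Finset.sum_congr rfl fun r _ => congrFun hl r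
          _ = 1 := hv
    have hRC : ∀ i R, w i R ≠ 0 → 1 ≤ (R ∩ C).card := by
      intro i R hw
      obtain ⟨α, hα⟩ := hwrec i R hw
      have hsum : ∑ l ∈ R, α l * (∑ r, G r l) = 1 := by
        have h1 : ∑ r, ∑ l ∈ R, α l * G r l = ∑ r : Fin k, Pi.single i (1 : ZMod 2) r := by
          rw [show (fun r => ∑ l ∈ R, α l * G r l) = Pi.single i (1 : ZMod 2) from hα]
        rw [Finset.sum_comm, Finset.sum_pi_single'] at h1
        simp only [Finset.mem_univ, if_true] at h1
        rw [← h1]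
        exact Finset.sum_congr rfl fun l _ => by rw [Finset.mul_sum]
      have hne : (R ∩ C).Nonempty := by
        by_contra hempty
        rw [Finset.not_nonempty_iff_eq_empty] at hempty
        have hz : ∀ l ∈ R, α l * (∑ r, G r l) = 0 := by
          intro l hl
          rcases zmod2_alt (∑ r, G r l) with h | h
          · rw [h, mul_zero]
          · exfalso
            have : l ∈ R ∩ C := by
              simp only [hC, Finset.mem_inter, Finset.mem_filter, Finset.mem_univ, true_and]
              exact ⟨hl, h⟩
            rw [hempty] at this
            exact absurd this (Finset.notMem_empty l)
        rw [Finset.sum_eq_zero hz] at hsum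
        exact absurd hsum.symm one_ne_zero
      exact hne.card_pos
    calc ∑ i, lam i = ∑ i : Fin k, ∑ R : Finset (Fin n), w i R :=
          Finset.sum_congr rfl fun i _ => (hwsum i).symm
      _ ≤ ∑ i : Fin k, ∑ R : Finset (Fin n), w i R * ((R ∩ C).card : ℝ) := by
          refine Finset.sum_le_sum fun i _ => Finset.sum_le_sum fun R _ => ?_
          by_cases h : w i R = 0
          · rw [h]; simp
          · have h1 : (1 : ℝ) ≤ ((R ∩ C).card : ℝ) := by exact_mod_cast hRC i R h
            calc w i R = w i R * 1 := (mul_one _).symm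
              _ ≤ w i R * ((R ∩ C).card : ℝ) :=
                mul_le_mul_of_nonneg_left h1 (hw0 i R)
      _ = ∑ l ∈ C, ∑ i : Fin k,
            ∑ R ∈ Finset.univ.filter (fun R : Finset (Fin n) => l ∈ R), w i R := by
          have hterm : ∀ (i : Fin k) (R : Finset (Fin n)),
              w i R * ((R ∩ C).card : ℝ) = ∑ l ∈ C, if l ∈ R then w i R else 0 := by
            intro i R
            have : ((R ∩ C).card : ℝ) = ∑ l ∈ C, if l ∈ R then (1:ℝ) else 0 := by
              rw [Finset.sum_boole]
              congr 1
              rw [Finset.inter_comm]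
              rfl
            rw [this, Finset.mul_sum]
            exact Finset.sum_congr rfl fun l _ => by split_ifs <;> simp
          calc ∑ i : Fin k, ∑ R : Finset (Fin n), w i R * ((R ∩ C).card : ℝ)
              = ∑ i : Fin k, ∑ R : Finset (Fin n), ∑ l ∈ C, if l ∈ R then w i R else 0 :=
                Finset.sum_congr rfl fun i _ => Finset.sum_congr rfl fun R _ => hterm i R
            _ = ∑ i : Fin k, ∑ l ∈ C, ∑ R : Finset (Fin n), if l ∈ R then w i R else 0 :=
                Finset.sum_congr rfl fun i _ => Finset.sum_comm
            _ = ∑ l ∈ C, ∑ i : Fin k, ∑ R : Finset (Fin n), if l ∈ R then w i R else 0 :=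
                Finset.sum_comm
            _ = ∑ l ∈ C, ∑ i : Fin k,
                  ∑ R ∈ Finset.univ.filter (fun R : Finset (Fin n) => l ∈ R), w i R := by
                refine Finset.sum_congr rfl fun l _ => Finset.sum_congr rfl fun i _ => ?_
                rw [Finset.sum_filter]
      _ ≤ ∑ l ∈ C, 1 := Finset.sum_le_sum fun l _ => hwcap l
      _ = 2 ^ (k - 1) := by
          rw [Finset.sum_const, hCcard]
          simp
  · -- REVERSE DIRECTION
    rintro ⟨h0, hs⟩
    classical
    set col : Fin n → Fin k → ZMod 2 := fun l r => G r l with hcoldef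
    set e : Fin k → (Fin k → ZMod 2) := fun i => Pi.single i 1 with hedef
    have hene : ∀ i, e i ≠ 0 := by
      intro i h
      have := congrFun h i
      simp [hedef] at this
    have hnonempty : Nonempty (Fin n) := by
      obtain ⟨l, -, -⟩ := hG (e ⟨0, hk⟩) (hene _)
      exact ⟨l⟩
    set L : (Fin k → ZMod 2) → Fin n :=
      fun v => if h : v ≠ 0 then (hG v h).choose else Classical.arbitrary _ with hLdef
    have hL : ∀ v, v ≠ 0 → col (L v) = v := by
      intro v hv
      show (fun r => G r (L v)) = v
      simp only [hLdef, dif_pos hv]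
      exact (hG v hv).choose_spec.1
    have hLuniq : ∀ v, v ≠ 0 → ∀ l, col l = v → l = L v := by
      intro v hv l hl
      obtain ⟨l0, h1, h2⟩ := hG v hv
      have hl' : (fun r => G r l) = v := hl
      rw [h2 l hl']
      exact (h2 _ (hL v hv)).symm
    set S : Fin k → Fin n → Finset (Fin n) :=
      fun i l => if col l = e i then {l} else {l, L (col l + e i)} with hSdef
    -- basic facts about the pair construction
    have hu0 : ∀ i l, col l ≠ e i → col l + e i ≠ 0 := by
      intro i l h hc
      exact h (SimplexSRRAux.fun_add_eq_zero_iff.mp hc)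
    have hpne : ∀ i l, col l ≠ 0 → col l ≠ e i → L (col l + e i) ≠ l := by
      intro i l hl0 hli heq
      have h1 : col l = col l + e i := by
        conv_lhs => rw [← heq]
        exact hL _ (hu0 i l hli)
      have h2 : col l + col l = col l + (col l + e i) := by rw [← h1]
      rw [SimplexSRRAux.fun_add_self, ← add_assoc, SimplexSRRAux.fun_add_self, zero_add] at h2
      exact hene i h2.symm
    have hScard1 : ∀ i l, col l = e i → (S i l).card = 1 := by
      intro i l h
      rw [hSdef]
      simp only [if_pos h, Finset.card_singleton]
    have hScard2 : ∀ i l, col l ≠ 0 → col l ≠ e i → (S i l).card = 2 := by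
      intro i l h0' h1
      rw [hSdef]
      simp only [if_neg h1]
      rw [Finset.card_pair]
      exact fun h => (hpne i l h0' h1) h.symm
    have hSsum : ∀ i l, col l ≠ 0 → ∑ m ∈ S i l, col m = e i := by
      intro i l hl0
      by_cases h : col l = e i
      · rw [hSdef]
        simp only [if_pos h, Finset.sum_singleton]
        exact h
      · rw [hSdef]
        simp only [if_neg h]
        rw [Finset.sum_pair (fun hc => (hpne i l hl0 h) hc.symm)]
        rw [hL _ (hu0 i l h), ← add_assoc, SimplexSRRAux.fun_add_self, zero_add]
    have hSmem : ∀ i l m, col l ≠ 0 → m ∈ S i l →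
        col m ≠ 0 ∧ (m = l ∨ col m = col l + e i) := by
      intro i l m hl0 hm
      rw [hSdef] at hm
      by_cases h : col l = e i
      · simp only [if_pos h, Finset.mem_singleton] at hm
        subst hm
        exact ⟨hl0, Or.inl rfl⟩
      · simp only [if_neg h, Finset.mem_insert, Finset.mem_singleton] at hm
        rcases hm with hm | hm
        · subst hm; exact ⟨hl0, Or.inl rfl⟩
        · subst hm
          rw [hL _ (hu0 i l h)]
          exact ⟨hu0 i l h, Or.inr rfl⟩
    set Nz : Finset (Fin n) := Finset.univ.filter (fun l => col l ≠ 0) with hNzdef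
    have hNzmem : ∀ l, l ∈ Nz ↔ col l ≠ 0 := by
      intro l; simp [hNzdef]
    have hNzcard : Nz.card = 2 ^ k - 1 := by
      have hvec : (Finset.univ.filter (fun v : Fin k → ZMod 2 => v ≠ 0)).card = 2 ^ k - 1 := by
        rw [Finset.filter_ne' Finset.univ 0, Finset.card_erase_of_mem (Finset.mem_univ 0)]
        simp [Finset.card_univ]
      rw [← hvec]
      apply Finset.card_bij (fun l _ => col l)
      · intro l hl
        rw [hNzmem] at hl
        simp only [Finset.mem_filter, Finset.mem_univ, true_and]
        exact hl
      · intro l hl l' hl' hll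
        rw [hNzmem] at hl
        rw [hLuniq (col l) hl l rfl]
        exact (hLuniq (col l) hl l' hll.symm).symm
      · intro v hv
        simp only [Finset.mem_filter, Finset.mem_univ, true_and] at hv
        exact ⟨L v, by rw [hNzmem, hL v hv]; exact hv, hL v hv⟩
    -- the main counting identity
    have hP2 : (0:ℝ) < 2 ^ (k - 1) := by positivity
    have h2k : (2:ℝ) ^ k = 2 ^ (k - 1) * 2 := by
      rw [← pow_succ, Nat.sub_add_cancel hk]
    have hsumNz : ∀ i, ∑ l ∈ Nz, ((S i l).card : ℝ)⁻¹ = 2 ^ (k - 1) := by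
      intro i
      have hmem : L (e i) ∈ Nz := by
        rw [hNzmem, hL _ (hene i)]; exact hene i
      rw [← Finset.insert_erase hmem, Finset.sum_insert (Finset.notMem_erase _ _)]
      have h1 : ((S i (L (e i))).card : ℝ)⁻¹ = 1 := by
        rw [hScard1 i _ (hL _ (hene i))]; norm_num
      have h2 : ∀ l ∈ Nz.erase (L (e i)), ((S i l).card : ℝ)⁻¹ = 2⁻¹ := by
        intro l hl
        have hlne := Finset.ne_of_mem_erase hl
        have hlNz := Finset.mem_of_mem_erase hl
        rw [hNzmem] at hlNz
        have hlei : col l ≠ e i := fun h => hlne (hLuniq _ (hene i) l h)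
        rw [hScard2 i l hlNz hlei]
        norm_num
      rw [Finset.sum_congr rfl h2, Finset.sum_const, h1,
        Finset.card_erase_of_mem hmem, hNzcard]
      have hle : 2 ≤ 2 ^ k := by
        calc 2 = 2 ^ 1 := (pow_one 2).symm
          _ ≤ 2 ^ k := Nat.pow_le_pow_right (by norm_num) hk
      have hcast : ((2 ^ k - 1 - 1 : ℕ) : ℝ) = 2 ^ k - 2 := by
        have : (2:ℕ) ^ k - 1 - 1 = 2 ^ k - 2 := by omega
        rw [this]
        push_cast [Nat.cast_sub hle]
        ring
      rw [nsmul_eq_mul, hcast, h2k]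
      ring
    -- the weighting
    set w : Fin k → Finset (Fin n) → ℝ :=
      fun i R => lam i / 2 ^ (k - 1) *
        ∑ l ∈ Nz, (if R = S i l then ((S i l).card : ℝ)⁻¹ else 0) with hwdef
    refine ⟨w, ?_, ?_, ?_, ?_⟩
    · intro i R
      apply mul_nonneg (div_nonneg (h0 i) hP2.le)
      apply Finset.sum_nonneg
      intro l _
      split_ifs
      · exact inv_nonneg.mpr (Nat.cast_nonneg _)
      · exact le_refl 0
    · intro i R hw
      have hex : ∃ l ∈ Nz, (if R = S i l then ((S i l).card : ℝ)⁻¹ else 0) ≠ 0 := by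
        by_contra hcon
        push_neg at hcon
        apply hw
        rw [hwdef]
        simp only []
        rw [Finset.sum_eq_zero hcon, mul_zero]
      obtain ⟨l, hlNz, hlne⟩ := hex
      have hR : R = S i l := by
        by_contra h
        rw [if_neg h] at hlne
        exact hlne rfl
      rw [hNzmem] at hlNz
      refine ⟨fun _ => 1, ?_⟩
      funext r
      have := congrFun (hSsum i l hlNz) r
      rw [Finset.sum_apply] at this
      rw [hR]
      simp only [one_mul]
      exact this
    · intro i
      have : ∀ l ∈ Nz, ∑ R : Finset (Fin n), (if R = S i l then ((S i l).card : ℝ)⁻¹ else 0)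
          = ((S i l).card : ℝ)⁻¹ := by
        intro l _
        rw [Finset.sum_ite_eq' Finset.univ (S i l) (fun _ => ((S i l).card : ℝ)⁻¹)]
        simp
      calc ∑ R : Finset (Fin n), w i R
          = lam i / 2 ^ (k - 1) *
            ∑ R : Finset (Fin n), ∑ l ∈ Nz, (if R = S i l then ((S i l).card : ℝ)⁻¹ else 0) := by
            rw [Finset.mul_sum]
        _ = lam i / 2 ^ (k - 1) *
            ∑ l ∈ Nz, ∑ R : Finset (Fin n), (if R = S i l then ((S i l).card : ℝ)⁻¹ else 0) := by
            rw [Finset.sum_comm]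
        _ = lam i / 2 ^ (k - 1) * ∑ l ∈ Nz, ((S i l).card : ℝ)⁻¹ := by
            rw [Finset.sum_congr rfl this]
        _ = lam i := by
            rw [hsumNz i, div_mul_cancel₀]
            exact hP2.ne'
    · intro m
      have hAeq : ∀ i, ∑ R ∈ Finset.univ.filter (fun R : Finset (Fin n) => m ∈ R), w i R
          = lam i / 2 ^ (k - 1) *
            ∑ l ∈ Nz, (if m ∈ S i l then ((S i l).card : ℝ)⁻¹ else 0) := by
        intro i
        rw [← Finset.mul_sum]
        congr 1
        rw [Finset.sum_comm]
        refine Finset.sum_congr rfl fun l _ => ?_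
        rw [Finset.sum_ite_eq' _ (S i l) (fun _ => ((S i l).card : ℝ)⁻¹)]
        simp only [Finset.mem_filter, Finset.mem_univ, true_and]
      have hAle : ∀ i, ∑ l ∈ Nz, (if m ∈ S i l then ((S i l).card : ℝ)⁻¹ else 0) ≤ 1 := by
        intro i
        by_cases hm0 : col m = 0
        · have : ∀ l ∈ Nz, (if m ∈ S i l then ((S i l).card : ℝ)⁻¹ else 0) = 0 := by
            intro l hl
            rw [hNzmem] at hl
            rw [if_neg]
            intro hmem
            exact (hSmem i l m hl hmem).1 hm0
          rw [Finset.sum_eq_zero this]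
          norm_num
        · by_cases hmi : col m = e i
          · have hmNz : m ∈ Nz := by rw [hNzmem]; exact hm0
            have hothers : ∀ l ∈ Nz, l ≠ m →
                (if m ∈ S i l then ((S i l).card : ℝ)⁻¹ else 0) = 0 := by
              intro l hl hlm
              rw [hNzmem] at hl
              rw [if_neg]
              intro hmem
              rcases (hSmem i l m hl hmem).2 with h | h
              · exact hlm h.symm
              · -- col m = col l + e i, so col l = col m + e i = e i + e i = 0
                have : col l = col m + e i := by
                  rw [h, add_assoc, SimplexSRRAux.fun_add_self, add_zero]
                rw [hmi, SimplexSRRAux.fun_add_self] at this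
                exact hl this
            rw [Finset.sum_eq_single_of_mem m hmNz hothers]
            split_ifs with h
            · rw [hScard1 i m hmi]
              norm_num
            · norm_num
          · -- the pair case
            set p := L (col m + e i) with hpdef
            have hu : col m + e i ≠ 0 := hu0 i m hmi
            have hcolp : col p = col m + e i := hL _ hu
            have hpNz : p ∈ Nz := by rw [hNzmem, hcolp]; exact hu
            have hmNz : m ∈ Nz := by rw [hNzmem]; exact hm0
            have hmp : m ≠ p := by
              intro h
              apply hene i
              have h1 : col m = col m + e i := by
                conv_lhs => rw [h]
                rw [hcolp]
              have h2 : col m + col m = col m + (col m + e i) := by rw [← h1]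
              rwa [SimplexSRRAux.fun_add_self, ← add_assoc, SimplexSRRAux.fun_add_self,
                zero_add, eq_comm] at h2
            have hsub : ({m, p} : Finset (Fin n)) ⊆ Nz := by
              intro x hx
              rcases Finset.mem_insert.mp hx with h | h
              · rwa [h]
              · rw [Finset.mem_singleton] at h; rwa [h]
            have hvanish : ∀ l ∈ Nz, l ∉ ({m, p} : Finset (Fin n)) →
                (if m ∈ S i l then ((S i l).card : ℝ)⁻¹ else 0) = 0 := by
              intro l hl hlnot
              rw [hNzmem] at hl
              simp only [Finset.mem_insert, Finset.mem_singleton, not_or] at hlnot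
              rw [if_neg]
              intro hmem
              rcases (hSmem i l m hl hmem).2 with h | h
              · exact hlnot.1 h.symm
              · have hcl : col l = col m + e i := by
                  rw [h, add_assoc, SimplexSRRAux.fun_add_self, add_zero]
                exact hlnot.2 (hLuniq _ hu l hcl)
            rw [← Finset.sum_subset hsub hvanish]
            rw [Finset.sum_pair hmp]
            have hbound : ∀ l, col l ≠ 0 → col l ≠ e i →
                (if m ∈ S i l then ((S i l).card : ℝ)⁻¹ else 0) ≤ 2⁻¹ := by
              intro l hl0 hli
              rw [hScard2 i l hl0 hli]
              split_ifs
              · norm_num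
              · norm_num
            have hpi : col p ≠ e i := by
              rw [hcolp]
              intro h
              apply hm0
              have := congrArg (· + e i) h
              simpa [add_assoc, SimplexSRRAux.fun_add_self] using this
            have := add_le_add (hbound m hm0 hmi) (hbound p (by rwa [hcolp]) hpi)
            linarith
      calc ∑ i : Fin k, ∑ R ∈ Finset.univ.filter (fun R : Finset (Fin n) => m ∈ R), w i R
          = ∑ i : Fin k, lam i / 2 ^ (k - 1) *
              ∑ l ∈ Nz, (if m ∈ S i l then ((S i l).card : ℝ)⁻¹ else 0) :=
            Finset.sum_congr rfl fun i _ => hAeq i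
        _ ≤ ∑ i : Fin k, lam i / 2 ^ (k - 1) * 1 := by
            refine Finset.sum_le_sum fun i _ => ?_
            exact mul_le_mul_of_nonneg_left (hAle i) (div_nonneg (h0 i) hP2.le)
        _ = (∑ i : Fin k, lam i) / 2 ^ (k - 1) := by
            rw [Finset.sum_div]
            exact Finset.sum_congr rfl fun i _ => by rw [mul_one]
        _ ≤ 1 := by
            rw [div_le_one hP2]
            exact hs
end

section
/- In the simplex code the demand vector 2^{k−1}·e_i is achievable for every i: the 2^k − 1 nonzero vectors of F_2^k partition into {e_i} and 2^{k−1} − 1 pairs summing to e_i, giving 2^{k−1} pairwise disjoint recovery sets for e_i. -/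
open scoped BigOperators
open scoped Classical

lemma zmod2_add_self : ∀ x : ZMod 2, x + x = 0 := by decide

lemma zmod2_ne_zero : ∀ x : ZMod 2, x ≠ 0 → x = 1 := by decide

/-- The number of vectors in `F_2^k` with `i`-th coordinate zero is `2^(k-1)`. -/
lemma card_eval_zero {k : ℕ} (hk : 1 ≤ k) (i : Fin k) :
    (Finset.univ.filter (fun w : Fin k → ZMod 2 => w i = 0)).card = 2 ^ (k - 1) := by
  classical
  set A := Finset.univ.filter (fun w : Fin k → ZMod 2 => w i = 0) with hA
  set B := Finset.univ.filter (fun w : Fin k → ZMod 2 => ¬ w i = 0) with hB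
  have hcard : A.card = B.card := by
    apply Finset.card_bij (fun w _ => w + Pi.single i 1)
    · intro w hw
      simp only [hA, Finset.mem_filter, Finset.mem_univ, true_and] at hw
      simp only [hB, Finset.mem_filter, Finset.mem_univ, true_and, Pi.add_apply,
        Pi.single_eq_same, hw, zero_add]
      exact one_ne_zero
    · intro a _ b _ h
      have := congrArg (· + Pi.single i (1 : ZMod 2)) h
      simpa [add_assoc, funext_iff, zmod2_add_self] using this
    · intro b hb
      refine ⟨b + Pi.single i 1, ?_, ?_⟩
      · simp only [hB, Finset.mem_filter, Finset.mem_univ, true_and] at hb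
        have hb1 : b i = 1 := zmod2_ne_zero _ hb
        simp [hA, Pi.add_apply, Pi.single_eq_same, hb1, zmod2_add_self]
      · funext j
        simp [add_assoc, zmod2_add_self]
  have hsum : A.card + B.card = Fintype.card (Fin k → ZMod 2) := by
    simpa [hA, hB] using
      Finset.card_filter_add_card_filter_not
        (s := (Finset.univ : Finset (Fin k → ZMod 2)))
        (p := fun w => w i = 0)
  have htot : Fintype.card (Fin k → ZMod 2) = 2 ^ k := by
    simp [Fintype.card_fun]
  have hk' : k = (k - 1) + 1 := by omega
  have : 2 * A.card = 2 * 2 ^ (k - 1) := by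
    rw [two_mul]
    calc A.card + A.card = A.card + B.card := by rw [hcard]
    _ = 2 ^ k := by rw [hsum, htot]
    _ = 2 * 2 ^ (k - 1) := by conv_lhs => rw [hk', pow_succ, Nat.mul_comm]
  omega

/-- For the binary `k`-dimensional simplex code with unit server capacities, the
demand vector `2^(k-1) • e_i` is achievable for every `i`. -/
theorem simplex_axis_achievable {k n : ℕ} (hk : 1 ≤ k)
    (G : Matrix (Fin k) (Fin n) (ZMod 2))
    (hG : ∀ v : Fin k → ZMod 2, v ≠ 0 → ∃! l : Fin n, (fun r => G r l) = v)
    (i : Fin k) :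
    (∃ fam : Finset (Finset (Fin n)), fam.card = 2 ^ (k - 1) ∧
      (∀ S ∈ fam, isRecoverySet G i S) ∧
      (∀ S ∈ fam, ∀ T ∈ fam, S ≠ T → Disjoint S T)) ∧
    servable G (fun _ => (1 : ℝ))
      (fun j => if j = i then (2 : ℝ) ^ (k - 1) else 0) := by
  classical
  set e : Fin k → ZMod 2 := Pi.single i 1 with he
  have hei : e i = 1 := by simp [he]
  have he0 : e ≠ 0 := by
    intro h
    have : e i = 0 := by rw [h]; rfl
    rw [hei] at this
    exact one_ne_zero this
  obtain ⟨l₀, -, -⟩ := hG e he0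
  set ℓ : (Fin k → ZMod 2) → Fin n :=
    fun v => if hv : v ≠ 0 then (hG v hv).exists.choose else l₀ with hℓdef
  have hℓ : ∀ v, v ≠ 0 → (fun r => G r (ℓ v)) = v := by
    intro v hv
    simp only [hℓdef, dif_pos hv]
    exact (hG v hv).exists.choose_spec
  have hℓinj : ∀ v u, v ≠ 0 → u ≠ 0 → ℓ v = ℓ u → v = u := by
    intro v u hv hu h
    have h1 := hℓ v hv
    have h2 := hℓ u hu
    rw [h, h2] at h1
    exact h1.symm
  -- the recovery set attached to a representative w (with w i = 0)
  set S : (Fin k → ZMod 2) → Finset (Fin n) :=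
    fun w => if w = 0 then {ℓ e} else {ℓ w, ℓ (w + e)} with hSdef
  have hadd_self : ∀ w : Fin k → ZMod 2, w + w = 0 := by
    intro w; funext j; simpa using zmod2_add_self (w j)
  have hwene : ∀ w : Fin k → ZMod 2, w i = 0 → w ≠ 0 → w + e ≠ 0 := by
    intro w hwi hw h
    have : (w + e) i = 0 := by rw [h]; rfl
    rw [Pi.add_apply, hwi, hei, zero_add] at this
    exact one_ne_zero this
  -- membership description of `S w` in terms of vectors
  have hmemS : ∀ w : Fin k → ZMod 2, w i = 0 → ∀ x, x ∈ S w →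
      (x = ℓ e ∧ w = 0) ∨ (w ≠ 0 ∧ (x = ℓ w ∨ x = ℓ (w + e))) := by
    intro w hwi x hx
    by_cases hw : w = 0
    · left
      simp only [hSdef, if_pos hw, Finset.mem_singleton] at hx
      exact ⟨hx, hw⟩
    · right
      simp only [hSdef, if_neg hw, Finset.mem_insert, Finset.mem_singleton] at hx
      exact ⟨hw, hx⟩
  -- pairwise disjointness of the recovery sets
  have hdisj : ∀ w w' : Fin k → ZMod 2, w i = 0 → w' i = 0 → w ≠ w' →
      Disjoint (S w) (S w') := by
    intro w w' hwi hw'i hne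
    rw [Finset.disjoint_left]
    intro x hx hx'
    have h1 := hmemS w hwi x hx
    have h2 := hmemS w' hw'i x hx'
    -- all vectors involved are nonzero; compare via hℓinj
    rcases h1 with ⟨hx1, hw0⟩ | ⟨hw0, hx1⟩ <;>
      rcases h2 with ⟨hx2, hw'0⟩ | ⟨hw'0, hx2⟩
    · exact hne (hw0.trans hw'0.symm)
    · rcases hx2 with hx2 | hx2
      · exact absurd (hℓinj e w' he0 hw'0 (hx2 ▸ hx1 ▸ rfl)).symm
          (by intro h; rw [h, hei] at hw'i; exact one_ne_zero hw'i)
      · have := hℓinj e (w' + e) he0 (hwene w' hw'i hw'0) (hx2 ▸ hx1 ▸ rfl)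
        have hw'0' : w' = 0 := by
          have := congrArg (· + e) this
          simpa [add_assoc, hadd_self] using this.symm
        exact hw'0 hw'0'
    · rcases hx1 with hx1 | hx1
      · exact absurd (hℓinj e w he0 hw0 (hx1 ▸ hx2 ▸ rfl)).symm
          (by intro h; rw [h, hei] at hwi; exact one_ne_zero hwi)
      · have := hℓinj e (w + e) he0 (hwene w hwi hw0) (hx1 ▸ hx2 ▸ rfl)
        have hw0' : w = 0 := by
          have := congrArg (· + e) this
          simpa [add_assoc, hadd_self] using this.symm
        exact hw0 hw0'
    · rcases hx1 with hx1 | hx1 <;> rcases hx2 with hx2 | hx2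
      · exact hne (hℓinj w w' hw0 hw'0 (hx1 ▸ hx2 ▸ rfl))
      · have := hℓinj w (w' + e) hw0 (hwene w' hw'i hw'0) (hx1 ▸ hx2 ▸ rfl)
        have : w i = w' i + e i := by rw [this]; rfl
        rw [hwi, hw'i, hei, zero_add] at this
        exact one_ne_zero this.symm
      · have := hℓinj (w + e) w' (hwene w hwi hw0) hw'0 (hx1 ▸ hx2 ▸ rfl)
        have : w i + e i = w' i := by rw [← this]; rfl
        rw [hwi, hw'i, hei, zero_add] at this
        exact one_ne_zero this
      · have := hℓinj (w + e) (w' + e) (hwene w hwi hw0) (hwene w' hw'i hw'0)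
          (hx1 ▸ hx2 ▸ rfl)
        have := congrArg (· + e) this
        simp only [add_assoc, hadd_self, add_zero] at this
        exact hne this
  -- each S w is a recovery set for i
  have hrec : ∀ w : Fin k → ZMod 2, w i = 0 → isRecoverySet G i (S w) := by
    intro w hwi
    refine ⟨fun _ => 1, ?_⟩
    by_cases hw : w = 0
    · simp only [hSdef, if_pos hw]
      funext r
      rw [Finset.sum_singleton, one_mul]
      have := congrFun (hℓ e he0) r
      simpa [he] using this
    · simp only [hSdef, if_neg hw]
      have hne : ℓ w ≠ ℓ (w + e) := by
        intro h
        have h1 := hℓinj w (w + e) hw (hwene w hwi hw) h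
        have h2 : w i = (w + e) i := congrFun h1 i
        rw [Pi.add_apply, hwi, hei, zero_add] at h2
        exact one_ne_zero h2.symm
      funext r
      rw [Finset.sum_pair hne, one_mul, one_mul]
      have h1 := congrFun (hℓ w hw) r
      have h2 := congrFun (hℓ (w + e) (hwene w hwi hw)) r
      rw [h1, h2, Pi.add_apply, ← add_assoc, zmod2_add_self, zero_add]
  -- the family
  set rep := Finset.univ.filter (fun w : Fin k → ZMod 2 => w i = 0) with hrep
  set fam := rep.image S with hfam
  have hSne : ∀ w, (S w).Nonempty := by
    intro w
    by_cases hw : w = 0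
    · simp [hSdef, hw]
    · simp [hSdef, hw]
  have hinjOn : Set.InjOn S ↑rep := by
    intro w hw w' hw' h
    by_contra hne
    have hd := hdisj w w' (by simpa [hrep] using hw) (by simpa [hrep] using hw') hne
    rw [h] at hd
    obtain ⟨x, hx⟩ := hSne w'
    exact Finset.disjoint_left.mp hd hx hx
  have hfamcard : fam.card = 2 ^ (k - 1) := by
    rw [hfam, Finset.card_image_of_injOn hinjOn, hrep]
    exact card_eval_zero hk i
  have hfamrec : ∀ T ∈ fam, isRecoverySet G i T := by
    intro T hT
    rw [hfam, Finset.mem_image] at hT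
    obtain ⟨w, hw, rfl⟩ := hT
    exact hrec w (by simpa [hrep] using hw)
  have hfamdisj : ∀ T ∈ fam, ∀ T' ∈ fam, T ≠ T' → Disjoint T T' := by
    intro T hT T' hT' hne
    rw [hfam, Finset.mem_image] at hT hT'
    obtain ⟨w, hw, rfl⟩ := hT
    obtain ⟨w', hw', rfl⟩ := hT'
    exact hdisj w w' (by simpa [hrep] using hw) (by simpa [hrep] using hw')
      (fun h => hne (by rw [h]))
  refine ⟨⟨fam, hfamcard, hfamrec, hfamdisj⟩, ?_⟩
  -- servability
  refine ⟨fun j R => if j = i then (if R ∈ fam then 1 else 0) else 0, ?_, ?_, ?_, ?_⟩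
  · intro j R
    dsimp only
    split_ifs <;> norm_num
  · intro j R hne
    dsimp only at hne
    have hj : j = i := by
      by_contra h
      simp [h] at hne
    subst hj
    have hR : R ∈ fam := by
      by_contra h
      simp [h] at hne
    exact hfamrec R hR
  · intro j
    dsimp only
    by_cases hj : j = i
    · subst hj
      simp only [if_pos rfl, if_true]
      rw [Finset.sum_ite_mem, Finset.univ_inter, Finset.sum_const, nsmul_eq_mul, mul_one,
        hfamcard]
      push_cast
      ring
    · simp [hj]
  · intro l
    dsimp only
    have hstep : ∀ j : Fin k,
        ∑ R ∈ Finset.univ.filter (fun R : Finset (Fin n) => l ∈ R),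
          (if j = i then (if R ∈ fam then (1 : ℝ) else 0) else 0)
        = if j = i then
            ((Finset.univ.filter (fun R : Finset (Fin n) => l ∈ R)).filter
              (fun R => R ∈ fam)).card else 0 := by
      intro j
      by_cases hj : j = i
      · simp only [if_pos hj]
        rw [Finset.sum_ite_mem, Finset.sum_const, nsmul_eq_mul, mul_one]
        congr 1
      · simp [hj]
    rw [Finset.sum_congr rfl (fun j _ => hstep j)]
    push_cast [Nat.cast_ite]
    simp only [Finset.sum_ite_eq', Finset.mem_univ, if_true]
    have hle : ((Finset.univ.filter (fun R : Finset (Fin n) => l ∈ R)).filter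
        (fun R => R ∈ fam)).card ≤ 1 := by
      apply Finset.card_le_one.mpr
      intro R hR T hT
      simp only [Finset.mem_filter, Finset.mem_univ, true_and] at hR hT
      by_contra hne
      have := hfamdisj R hR.2 T hT.2 hne
      exact Finset.disjoint_left.mp this hR.1 hT.1
    exact_mod_cast hle
end
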